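/- arXiv:2011.10868 — 2 statements merged into one kernel-verified Lean document; each statement's English description precedes it below -/
import Mathlib

section
/- Let k ⊆ K be differential fields, and let a, b be tuples from K with vanishing differential ideals I_k(a) ⊆ k{x}, I_k(b) ⊆ k{y}, I_k(a,b) ⊆ k{x,y}. If I_k(a,b) equals the ideal of k{x,y} generated by I_k(a) and I_k(b), then the vanishing ideal I_{k⟨b⟩}(a) of a over the differential field k⟨b⟩ is generated (as an ideal of k⟨b⟩{x}) by I_k(a). -/
/-!
Clearing denominators: every element of `k⟨b⟩` is a quotient of values at `b` of differential
polynomials over `k`, so some nonzero multiple `s • p` of a given `p ∈ I_{k⟨b⟩}(a)` is the image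
of a `P ∈ k{x, y}` under the substitution `y ↦ b`. Then `P` vanishes at `(a, b)`, so it lies in
`⟨I_k(a), I_k(b)⟩`; the substitution sends `I_k(a)` into its extension and kills `I_k(b)`, hence
`s • p`, and with it `p`, lies in the ideal generated by `I_k(a)`.
-/

open MvPolynomial

theorem RingHom.exists_common_denominator {B F : Type*} [CommRing B] [Field F] (f : B →+* F)
    (hfrac : ∀ x : F, ∃ r s, f s ≠ 0 ∧ f s * x = f r) (T : Finset F) :
    ∃ s, f s ≠ 0 ∧ ∀ x ∈ T, f s * x ∈ Set.range f := by
  classical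
  choose r s hs hrs using hfrac
  refine ⟨∏ x ∈ T, s x, ?_, fun x hx => ⟨(∏ y ∈ T.erase x, s y) * r x, ?_⟩⟩
  · simpa only [map_prod] using Finset.prod_ne_zero_iff.mpr fun x _ => hs x
  · rw [map_mul, ← hrs, map_prod, map_prod, ← Finset.mul_prod_erase T _ hx]
    ring

theorem Subfield.exists_mul_eq_of_le_closure {B K : Type*} [CommRing B] [Field K]
    {F : Subfield K} (f : B →+* F) {s : Set K} (hs : s ⊆ Set.range (F.subtype.comp f))
    (hF : F ≤ Subfield.closure s) (x : F) : ∃ r t, f t ≠ 0 ∧ f t * x = f r := by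
  obtain ⟨y, hy, z, hz, hyz⟩ := Subfield.mem_closure_iff.mp (hF x.2)
  have hrange : Subring.closure s ≤ (F.subtype.comp f).range := Subring.closure_le.mpr hs
  obtain ⟨r, rfl⟩ := hrange hy
  obtain ⟨t, rfl⟩ := hrange hz
  by_cases ht : f t = 0
  · refine ⟨0, 1, by simp, ?_⟩
    rw [← Subtype.coe_inj]
    simp [← hyz, ht]
  · refine ⟨r, t, ht, ?_⟩
    rw [← Subtype.coe_inj]
    simp only [Subfield.coe_mul, ← hyz, RingHom.comp_apply, Subfield.coe_subtype]
    exact mul_div_cancel₀ _ (by exact_mod_cast ht)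

namespace MvPolynomial

theorem exists_C_mul_eq_map {σ B F : Type*} [CommRing B] [Field F] (f : B →+* F)
    (hfrac : ∀ x : F, ∃ r s, f s ≠ 0 ∧ f s * x = f r) (p : MvPolynomial σ F) :
    ∃ s Q, f s ≠ 0 ∧ C (f s) * p = map f Q := by
  obtain ⟨s, hs, hsT⟩ := f.exists_common_denominator hfrac p.coeffs
  obtain ⟨Q, hQ⟩ : C (f s) * p ∈ Set.range (map f) := by
    rw [mem_range_map_iff_coeffs_subset]
    intro y hy
    obtain ⟨m, hm, rfl⟩ := mem_coeffs_iff.mp hy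
    rw [mem_support_iff, coeff_C_mul] at hm
    rw [coeff_C_mul]
    exact hsT _ (coeff_mem_coeffs m (right_ne_zero_of_mul hm))
  exact ⟨s, Q, hs, hQ.symm⟩

section SubstInr

variable {ι κ R S : Type*} [CommRing R] [CommRing S] (i : R →+* S) (v : κ × ℕ → S)

noncomputable def substInr : MvPolynomial ((ι ⊕ κ) × ℕ) R →+* MvPolynomial (ι × ℕ) S :=
  eval₂Hom (C.comp i) fun q => Sum.elim (fun x => X (x, q.2)) (fun j => C (v (j, q.2))) q.1

theorem substInr_rename_inl (g : MvPolynomial (ι × ℕ) R) :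
    substInr i v (rename (Prod.map Sum.inl id) g) = map i g := by
  rw [map_eq_eval₂Hom_C_comp, substInr, coe_eval₂Hom, coe_eval₂Hom, eval₂_rename]
  rfl

theorem substInr_rename_inr (e : MvPolynomial (κ × ℕ) R) :
    substInr (ι := ι) i v (rename (Prod.map Sum.inr id) e) = C (eval₂ i v e) := by
  simp only [substInr, coe_eval₂Hom, eval₂_rename]
  exact (eval₂_comp_left C i v e).symm

theorem exists_substInr_eq_map (Q : MvPolynomial (ι × ℕ) (MvPolynomial (κ × ℕ) R)) :
    ∃ P, substInr i v P = map (eval₂Hom i v) Q := by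
  let merge : MvPolynomial (ι × ℕ) (MvPolynomial (κ × ℕ) R) →+* MvPolynomial ((ι ⊕ κ) × ℕ) R :=
    eval₂Hom (rename (Prod.map Sum.inr id)).toRingHom fun m => X (Prod.map Sum.inl id m)
  refine ⟨merge Q, ?_⟩
  rw [← RingHom.comp_apply]
  congr 1
  refine MvPolynomial.ringHom_ext (fun e => ?_) fun m => ?_
  · simp [merge, substInr_rename_inr]
  · simp [merge, substInr]

theorem eval₂_substInr {T : Type*} [CommRing T] (g : S →+* T) (u : ι × ℕ → T)
    (w : (ι ⊕ κ) × ℕ → T) (hinl : ∀ x n, w (.inl x, n) = u (x, n))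
    (hinr : ∀ j n, w (.inr j, n) = g (v (j, n))) (P : MvPolynomial ((ι ⊕ κ) × ℕ) R) :
    eval₂ g u (substInr i v P) = eval₂ (g.comp i) w P := by
  change (eval₂Hom g u).comp (substInr i v) P = eval₂Hom _ _ P
  congr 1
  refine MvPolynomial.ringHom_ext (fun c => ?_) fun q => ?_
  · simp [substInr]
  · obtain ⟨x | j, n⟩ := q <;> simp [substInr, hinl, hinr]

theorem substInr_mem_map_of_mem_span (I : Ideal (MvPolynomial (ι × ℕ) R))
    (J : Ideal (MvPolynomial (κ × ℕ) R)) (hJ : ∀ e ∈ J, eval₂ i v e = 0)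
    {P : MvPolynomial ((ι ⊕ κ) × ℕ) R}
    (hP : P ∈ Ideal.span (rename (Prod.map Sum.inl id) '' I ∪ rename (Prod.map Sum.inr id) '' J)) :
    substInr i v P ∈ I.map (map i) := by
  refine (Ideal.span_le.mpr ?_ : _ ≤ (I.map (map i)).comap (substInr i v)) hP
  rintro _ (⟨g, hg, rfl⟩ | ⟨e, he, rfl⟩)
  · rw [SetLike.mem_coe, Ideal.mem_comap, substInr_rename_inl]
    exact Ideal.mem_map_of_mem _ hg
  · rw [SetLike.mem_coe, Ideal.mem_comap, substInr_rename_inr, hJ e he, C_0]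
    exact zero_mem _

end SubstInr

theorem ker_eval₂Hom_eq_map_of_le_span {ι κ R F T : Type*} [CommRing R] [Field F] [CommRing T]
    (i : R →+* F) (v : κ × ℕ → F) (g : F →+* T) (u : ι × ℕ → T) (w : (ι ⊕ κ) × ℕ → T)
    (hinl : ∀ x n, w (.inl x, n) = u (x, n)) (hinr : ∀ j n, w (.inr j, n) = g (v (j, n)))
    (J : Ideal (MvPolynomial (κ × ℕ) R)) (hJ : ∀ e ∈ J, eval₂ i v e = 0)
    (hfrac : ∀ x : F, ∃ r s, eval₂Hom i v s ≠ 0 ∧ eval₂Hom i v s * x = eval₂Hom i v r)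
    (hspan : RingHom.ker (eval₂Hom (g.comp i) w) ≤ Ideal.span
      (rename (Prod.map Sum.inl id) '' RingHom.ker (eval₂Hom (g.comp i) u) ∪
        rename (Prod.map Sum.inr id) '' J)) :
    RingHom.ker (eval₂Hom g u) = (RingHom.ker (eval₂Hom (g.comp i) u)).map (map i) := by
  refine le_antisymm (fun p hp => ?_) ?_
  · obtain ⟨s, Q, hs, hsQ⟩ := exists_C_mul_eq_map (eval₂Hom i v) hfrac p
    obtain ⟨P, hP⟩ := exists_substInr_eq_map i v Q
    have hPw : P ∈ RingHom.ker (eval₂Hom (g.comp i) w) := by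
      rw [RingHom.mem_ker, coe_eval₂Hom, ← eval₂_substInr i v g u w hinl hinr, hP, ← hsQ,
        eval₂_mul, ← coe_eval₂Hom g u, RingHom.mem_ker.mp hp, mul_zero]
    have hsp := substInr_mem_map_of_mem_span i v _ J hJ (hspan hPw)
    rw [hP, ← hsQ] at hsp
    exact (Ideal.unit_mul_mem_iff_mem _ ((isUnit_iff_ne_zero.mpr hs).map C)).mp hsp
  · rw [Ideal.map_le_iff_le_comap]
    intro q hq
    rw [Ideal.mem_comap, RingHom.mem_ker, coe_eval₂Hom, eval₂_map]
    exact hq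

end MvPolynomial

theorem vanishing_ideal_over_generated_field_general {K : Type*} [Field K]
    (d : Derivation ℤ K K) (k : Subfield K)
    {ι κ : Type*} (a : ι → K) (b : κ → K)
    -- the vanishing differential ideals of `a`, `b`, and the joint tuple `(a, b)` over `k`
    (Ia : Ideal (MvPolynomial (ι × ℕ) k)) (Ib : Ideal (MvPolynomial (κ × ℕ) k))
    (Iab : Ideal (MvPolynomial ((ι ⊕ κ) × ℕ) k))
    (hIa : Ia = RingHom.ker (aeval (R := k) fun p : ι × ℕ => (⇑d)^[p.2] (a p.1)).toRingHom)
    (hIb : Ib = RingHom.ker (aeval (R := k) fun p : κ × ℕ => (⇑d)^[p.2] (b p.1)).toRingHom)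
    (hIab : Iab = RingHom.ker
      (aeval (R := k) fun p : (ι ⊕ κ) × ℕ => (⇑d)^[p.2] (Sum.elim a b p.1)).toRingHom)
    -- hypothesis: `I_k(a,b) = ⟨I_k(a), I_k(b)⟩`
    (hgen : Iab = Ideal.span
      ((rename (Prod.map Sum.inl id) : MvPolynomial (ι × ℕ) k →ₐ[k] _) '' Ia ∪
        (rename (Prod.map Sum.inr id) : MvPolynomial (κ × ℕ) k →ₐ[k] _) '' Ib))
    -- `F = k⟨b⟩`, the differential subfield of `K` generated by `k` and `b`
    (F : Subfield K)
    (hF : F = Subfield.closure ((k : Set K) ∪ {x | ∃ (j : κ) (n : ℕ), x = (⇑d)^[n] (b j)}))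
    (hkF : k ≤ F) :
    RingHom.ker (aeval (R := F) fun p : ι × ℕ => (⇑d)^[p.2] (a p.1)).toRingHom =
      Ideal.map (MvPolynomial.map (Subfield.inclusion hkF)) Ia := by
  subst hIa hIb hIab
  have hb (q : κ × ℕ) : (⇑d)^[q.2] (b q.1) ∈ F :=
    hF ▸ Subfield.subset_closure (Or.inr ⟨q.1, q.2, rfl⟩)
  set incl := Subfield.inclusion hkF
  set vb : κ × ℕ → F := fun q => ⟨_, hb q⟩
  have hevalb : F.subtype.comp (eval₂Hom incl vb) =
      (aeval fun q : κ × ℕ => (⇑d)^[q.2] (b q.1)).toRingHom :=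
    RingHom.ext fun e => eval₂_comp_left F.subtype incl vb e
  refine ker_eval₂Hom_eq_map_of_le_span incl vb F.subtype _ _ (fun _ _ => rfl) (fun _ _ => rfl)
    _ (fun e he => Subtype.ext ((RingHom.congr_fun hevalb e).trans he)) ?_ hgen.le
  refine Subfield.exists_mul_eq_of_le_closure _ ?_ hF.le
  rintro _ (hx | ⟨j, n, rfl⟩) <;> rw [hevalb]
  · exact ⟨C ⟨_, hx⟩, aeval_C _ _⟩
  · exact ⟨X (j, n), aeval_X _ _⟩

/-- Let `k ⊆ K` be differential fields and `a`, `b` tuples from `K`.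
Here the ring of differential polynomials over `k` in a tuple `x` of variables indexed
by `ι` is modelled as `MvPolynomial (ι × ℕ) k`, where `(i, n)` stands for `x_i^{(n)}`,
and evaluation at a tuple `a` sends `(i, n)` to `d^[n] (a i)`; the vanishing
(differential) ideal `I_k(a)` is the kernel of this evaluation.
If the vanishing ideal `I_k(a, b)` of the joint tuple equals the ideal generated by
`I_k(a)` and `I_k(b)`, then the vanishing ideal of `a` over the differential field
`k⟨b⟩` generated by `k` and `b` is generated by `I_k(a)`. -/
theorem vanishing_ideal_over_generated_field {K : Type*} [Field K]
    (d : Derivation ℤ K K) (k : Subfield K) (hk : ∀ x ∈ k, d x ∈ k)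
    {ι κ : Type*} (a : ι → K) (b : κ → K)
    -- the vanishing differential ideals of `a`, `b`, and the joint tuple `(a, b)` over `k`
    (Ia : Ideal (MvPolynomial (ι × ℕ) k)) (Ib : Ideal (MvPolynomial (κ × ℕ) k))
    (Iab : Ideal (MvPolynomial ((ι ⊕ κ) × ℕ) k))
    (hIa : Ia = RingHom.ker (aeval (R := k) fun p : ι × ℕ => (⇑d)^[p.2] (a p.1)).toRingHom)
    (hIb : Ib = RingHom.ker (aeval (R := k) fun p : κ × ℕ => (⇑d)^[p.2] (b p.1)).toRingHom)
    (hIab : Iab = RingHom.ker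
      (aeval (R := k) fun p : (ι ⊕ κ) × ℕ => (⇑d)^[p.2] (Sum.elim a b p.1)).toRingHom)
    -- hypothesis: `I_k(a,b) = ⟨I_k(a), I_k(b)⟩`
    (hgen : Iab = Ideal.span
      ((rename (Prod.map Sum.inl id) : MvPolynomial (ι × ℕ) k →ₐ[k] _) '' Ia ∪
        (rename (Prod.map Sum.inr id) : MvPolynomial (κ × ℕ) k →ₐ[k] _) '' Ib))
    -- `F = k⟨b⟩`, the differential subfield of `K` generated by `k` and `b`
    (F : Subfield K)
    (hF : F = Subfield.closure ((k : Set K) ∪ {x | ∃ (j : κ) (n : ℕ), x = (⇑d)^[n] (b j)}))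
    (hkF : k ≤ F) :
    RingHom.ker (aeval (R := F) fun p : ι × ℕ => (⇑d)^[p.2] (a p.1)).toRingHom =
      Ideal.map (MvPolynomial.map (Subfield.inclusion hkF)) Ia :=
  vanishing_ideal_over_generated_field_general d k a b Ia Ib Iab hIa hIb hIab hgen F hF hkF
end

section
/- Let k be a field, F ⊆ k a subfield, and I ⊆ k[T] an ideal of a polynomial ring (possibly in infinitely many variables) that is generated by polynomials with coefficients in F (i.e., F contains a field of definition of I). Let a be a point with vanishing ideal I over k, and suppose P ∈ F[T][y₁,…,y_N] is a polynomial in extra variables y with coefficients in F[T] such that P(a, α₁, …, α_N) = 0 for elements α₁, …, α_N ∈ k that are algebraically independent over F. Then every coefficient of P viewed as a polynomial in y₁, …, y_N vanishes at a, i.e., P(a, y₁, …, y_N) = 0 identically. -/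
/-!
The monomials `α^m` are `F`-linearly independent in `k`, so for a fixed exponent `m` there is an
`F`-linear functional `λ : k → F` with `λ (α^m) = 1` and `λ (α^n) = 0` for `n ≠ m`. Applied
coefficientwise, `λ` gives an `F[T]`-linear map `k[T] → F[T]`; by linearity it sends the
extension of `span S` to `k[T]` back into `span S`. It sends `P(T, α) ∈ I` to the coefficient
`P_m`, so `P_m ∈ span S ⊆ I`, i.e. `P_m` vanishes at `a`.
-/

open MvPolynomial

theorem AlgebraicIndependent.linearIndependent_aeval_monomial {ι R A : Type*} [CommRing R]
    [CommRing A] [Algebra R A] {x : ι → A} (hx : AlgebraicIndependent R x) :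
    LinearIndependent R fun m : ι →₀ ℕ => aeval x (monomial m (1 : R)) := by
  have h : LinearIndependent R ((aeval x).toLinearMap ∘ basisMonomials ι R) :=
    (basisMonomials ι R).linearIndependent.map' _ (LinearMap.ker_eq_bot.2 hx)
  rwa [coe_basisMonomials] at h

theorem LinearIndependent.exists_dual_apply_eq_one_and_apply_eq_zero {ι K V : Type*} [Field K]
    [AddCommGroup V] [Module K V] {v : ι → V} (hv : LinearIndependent K v) (i : ι) :
    ∃ f : Module.Dual K V, f (v i) = 1 ∧ ∀ j ≠ i, f (v j) = 0 := by
  obtain ⟨f, hf⟩ := LinearMap.exists_extend (Finsupp.lapply i ∘ₗ hv.repr)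
  have hfv (j : ι) : f (v j) = Finsupp.single j 1 i := by
    have hj : v j ∈ Submodule.span K (Set.range v) := Submodule.subset_span ⟨j, rfl⟩
    simpa [hv.repr_eq_single j ⟨v j, hj⟩ rfl] using LinearMap.congr_fun hf ⟨v j, hj⟩
  exact ⟨f, by simp [hfv], fun j hj => by simp [hfv, Finsupp.single_eq_of_ne' hj]⟩

namespace MvPolynomial

section MapCoeffs

variable {σ R A : Type*} [CommSemiring R] [CommSemiring A] [Algebra R A] (f : A →ₗ[R] R)

noncomputable def mapCoeffs : MvPolynomial σ A →ₗ[R] MvPolynomial σ R :=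
  (AddMonoidAlgebra.coeffLinearEquiv R).symm.toLinearMap ∘ₗ Finsupp.mapRange.linearMap f ∘ₗ
    (AddMonoidAlgebra.coeffLinearEquiv R).toLinearMap

@[simp]
theorem coeff_mapCoeffs (p : MvPolynomial σ A) (t : σ →₀ ℕ) :
    coeff t (mapCoeffs f p) = f (coeff t p) := rfl

theorem mapCoeffs_C (a : A) : mapCoeffs f (C a : MvPolynomial σ A) = C (f a) := by
  classical
  ext t
  simp only [coeff_mapCoeffs, coeff_C]
  split_ifs <;> simp

theorem mapCoeffs_mul_map (p : MvPolynomial σ A) (q : MvPolynomial σ R) :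
    mapCoeffs f (p * map (algebraMap R A) q) = mapCoeffs f p * q := by
  classical
  ext t
  simp only [coeff_mapCoeffs, coeff_mul, coeff_map, map_sum]
  refine Finset.sum_congr rfl fun x _ => ?_
  rw [mul_comm, ← Algebra.smul_def, map_smul, smul_eq_mul, mul_comm]

theorem mapCoeffs_mem_of_mem_map {J : Ideal (MvPolynomial σ R)} {p : MvPolynomial σ A}
    (hp : p ∈ J.map (map (algebraMap R A))) : mapCoeffs f p ∈ J := by
  suffices ∀ q, mapCoeffs f (q * p) ∈ J by simpa using this 1
  induction hp using Submodule.span_induction with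
  | mem _ hy =>
    obtain ⟨j, hj, rfl⟩ := hy
    exact fun q => mapCoeffs_mul_map f q j ▸ J.mul_mem_left _ hj
  | zero => simp
  | add x y _ _ hx hy => exact fun q => by simpa [mul_add] using add_mem (hx q) (hy q)
  | smul c x _ hx => exact fun q => by simpa [mul_assoc] using hx (q * c)

theorem mapCoeffs_eval₂_C {ι : Type*} (x : ι → A) (P : MvPolynomial ι (MvPolynomial σ R)) :
    mapCoeffs f (eval₂ (map (algebraMap R A)) (fun i => C (x i)) P) =
      ∑ m ∈ P.support, C (f (aeval x (monomial m (1 : R)))) * coeff m P := by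
  rw [eval₂_eq, map_sum]
  refine Finset.sum_congr rfl fun m _ => ?_
  have hC : ∏ i ∈ m.support, (C (x i) : MvPolynomial σ A) ^ m i =
      C (aeval x (monomial m (1 : R))) := by
    simp [aeval_monomial, Finsupp.prod]
  rw [hC, mul_comm, mapCoeffs_mul_map, mapCoeffs_C]

end MapCoeffs

theorem coeff_mem_of_eval₂_mem_map {ι σ K L : Type*} [Field K] [CommRing L] [Algebra K L]
    {x : ι → L} (hx : AlgebraicIndependent K x) {J : Ideal (MvPolynomial σ K)}
    {P : MvPolynomial ι (MvPolynomial σ K)}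
    (hP : eval₂ (map (algebraMap K L)) (fun i => C (x i)) P ∈ J.map (map (algebraMap K L)))
    (m : ι →₀ ℕ) : coeff m P ∈ J := by
  obtain ⟨f, hfm, hf⟩ :=
    hx.linearIndependent_aeval_monomial.exists_dual_apply_eq_one_and_apply_eq_zero m
  have := mapCoeffs_mem_of_mem_map f hP
  rwa [mapCoeffs_eval₂_C, Finset.sum_eq_single m (fun n _ hn => by simp [hf n hn])
    (fun hm => by simp [notMem_support_iff.1 hm]), hfm, C_1, one_mul] at this

end MvPolynomial

/-- Let `F ⊆ k` be fields, `Ω ⊇ k` a field extension, `a : T → Ω` a point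
whose vanishing ideal `I ⊆ k[T]` is generated by polynomials with coefficients in `F`.
If `P ∈ F[T][y₁, …, y_N]` vanishes when evaluated at `a` in the `T`-variables and at
elements `α₁, …, α_N ∈ k` that are algebraically independent over `F` in the
`y`-variables, then every coefficient of `P` (as a polynomial in `y₁, …, y_N`)
vanishes at `a`. -/
theorem coefficients_vanish_of_alg_indep {k Ω : Type*} [Field k] [Field Ω]
    [Algebra k Ω] (F : Subfield k) {T : Type*} (a : T → Ω)
    (I : Ideal (MvPolynomial T k))
    (hI : I = RingHom.ker (aeval (R := k) a).toRingHom)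
    -- `F` contains a field of definition of `I`: `I` is generated by polynomials over `F`
    (S : Set (MvPolynomial T F))
    (hdef : I = Ideal.span (MvPolynomial.map (F.subtype) '' S))
    (N : ℕ) (P : MvPolynomial (Fin N) (MvPolynomial T F))
    (α : Fin N → k) (hα : AlgebraicIndependent F α)
    (hP : eval₂ (eval₂Hom ((algebraMap k Ω).comp F.subtype) a)
        (fun i => algebraMap k Ω (α i)) P = 0) :
    ∀ m : Fin N →₀ ℕ,
      eval₂ ((algebraMap k Ω).comp F.subtype) a (MvPolynomial.coeff m P) = 0 := by
  have haeval_map : (aeval a : MvPolynomial T k →ₐ[k] Ω).toRingHom.comp (map F.subtype) =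
      eval₂Hom ((algebraMap k Ω).comp F.subtype) a :=
    RingHom.ext fun q => by simp [aeval_def, eval₂_map]
  have hg : eval₂ (map F.subtype) (fun i => C (α i)) P ∈ I := by
    rw [hI, RingHom.mem_ker, eval₂_comp_left, haeval_map]
    simpa [Function.comp_def] using hP
  rw [hdef, ← Ideal.map_span] at hg
  intro m
  have hm := Ideal.mem_map_of_mem (map F.subtype) (coeff_mem_of_eval₂_mem_map hα hg m)
  rw [Ideal.map_span, ← hdef, hI, RingHom.mem_ker, ← RingHom.comp_apply, haeval_map] at hm
  exact hm
end
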